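/- arXiv:2302.01783 — 6 statements merged into one kernel-verified Lean document; each statement's English description precedes it below -/
import Mathlib

section
/- Let d ≥ 1 and let f : ℕ^d → ℕ (positive integers) be a function. Suppose there exists C ≥ 1 such that f(n₁,…,n_d) < max{n₁,…,n_d} whenever n_i ≥ C for at least one index i ∈ {1,…,d}. Let (x_n)_{n≥1} be a sequence of positive integers satisfying x_{n+d} = f(x_n, x_{n+1}, …, x_{n+d-1}) for all n ≥ 1. Then limsup_{n→∞} x_n ≤ max{ f(n₁,…,n_d) : 1 ≤ n₁,…,n_d ≤ C−1 }; in particular the sequence (x_n) is bounded. -/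
/-- If `f : ℕ^d → ℕ` (positive integers) satisfies `f(n₁,…,n_d) < max nᵢ`
whenever some `nᵢ ≥ C`, then any sequence of positive integers satisfying the order-`d`
recurrence for `f` has `limsup x_n ≤ max { f(n₁,…,n_d) : 1 ≤ nᵢ ≤ C-1 }`;
in particular it is bounded. -/
theorem stmt_0 (d : ℕ) (hd : 1 ≤ d) (f : (Fin d → ℕ) → ℕ)
    (hfpos : ∀ v : Fin d → ℕ, (∀ i, 1 ≤ v i) → 1 ≤ f v)
    (C : ℕ) (hC : 1 ≤ C)
    (hdec : ∀ v : Fin d → ℕ, (∀ i, 1 ≤ v i) → (∃ i, C ≤ v i) →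
      f v < Finset.univ.sup v)
    (x : ℕ → ℕ) (hxpos : ∀ n, 1 ≤ n → 1 ≤ x n)
    (hrec : ∀ n, 1 ≤ n → x (n + d) = f (fun i => x (n + i))) :
    Filter.atTop.limsup x ≤
      (Fintype.piFinset (fun _ : Fin d => Finset.Icc 1 (C - 1))).sup f ∧
    ∃ B : ℕ, ∀ n, x n ≤ B := by
  haveI : Nonempty (Fin d) := ⟨⟨0, hd⟩⟩
  set S := (Fintype.piFinset (fun _ : Fin d => Finset.Icc 1 (C - 1))).sup f with hS
  set m : ℕ → ℕ := fun n => Finset.univ.sup (fun i : Fin d => x (n + i)) with hm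
  have hle_m : ∀ n (i : Fin d), x (n + i) ≤ m n := by
    intro n i
    exact Finset.le_sup (f := fun i : Fin d => x (n + i)) (Finset.mem_univ i)
  -- step lemma
  have hstep : ∀ n, 1 ≤ n → C ≤ m n → x (n + d) < m n := by
    intro n hn hCm
    rw [hrec n hn]
    refine hdec _ (fun i => hxpos _ (by omega)) ?_
    obtain ⟨i, -, hi⟩ := Finset.exists_mem_eq_sup Finset.univ
      (Finset.univ_nonempty) (fun i : Fin d => x (n + i))
    have hCm2 : C ≤ Finset.univ.sup (fun i : Fin d => x (n + i)) := hCm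
    exact ⟨i, hi ▸ hCm2⟩
  -- existence of N with m N < C
  have hA : ∃ N, 1 ≤ N ∧ m N < C := by
    by_contra hcon
    push_neg at hcon
    have hall : ∀ N, 1 ≤ N → C ≤ m N := fun N hN => hcon N hN
    have hmono : ∀ n, 1 ≤ n → m (n + 1) ≤ m n := by
      intro n hn
      apply Finset.sup_le
      intro i _
      rcases lt_or_eq_of_le (Nat.succ_le_of_lt i.isLt) with h | h
      · have : n + 1 + (i : ℕ) = n + ((⟨(i : ℕ) + 1, h⟩ : Fin d) : ℕ) := by simp; omega
        rw [this]; exact hle_m n _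
      · have : n + 1 + (i : ℕ) = n + d := by omega
        rw [this]; exact le_of_lt (hstep n hn (hall n hn))
    have hmono' : ∀ n, 1 ≤ n → ∀ j, m (n + j) ≤ m n := by
      intro n hn j
      induction j with
      | zero => exact le_rfl
      | succ j ih =>
        have := hmono (n + j) (by omega)
        calc m (n + (j+1)) = m (n + j + 1) := by ring_nf
        _ ≤ m (n + j) := this
        _ ≤ m n := ih
    have hdecr : ∀ n, 1 ≤ n → m (n + d) < m n := by
      intro n hn
      have hbot : 0 < m n := lt_of_lt_of_le hC (hall n hn)
      rw [hm]
      apply Finset.sup_lt_iff hbot |>.2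
      intro i _
      have h1 : n + d + (i : ℕ) = (n + i) + d := by omega
      have h2 : x ((n + i) + d) < m (n + i) :=
        hstep (n + i) (by omega) (hall _ (by omega))
      calc x (n + d + (i:ℕ)) = x ((n+i)+d) := by rw [h1]
      _ < m (n + i) := h2
      _ ≤ m n := hmono' n hn i
    have key : ∀ k, m (1 + k * d) + k ≤ m 1 := by
      intro k
      induction k with
      | zero => simp
      | succ k ih =>
        have : m (1 + (k+1) * d) < m (1 + k * d) := by
          have := hdecr (1 + k * d) (by omega)
          have he : 1 + (k+1) * d = 1 + k * d + d := by ring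
          rw [he]; exact this
        omega
    have := key (m 1 + 1)
    omega
  obtain ⟨N, hN1, hNC⟩ := hA
  -- entries of window at N are < C
  have hwin : ∀ j, j < d → x (N + j) < C := by
    intro j hj
    have := hle_m N ⟨j, hj⟩
    simp only at this
    omega
  -- key claim
  have key : ∀ k, x (N + d + k) ≤ S := by
    intro k
    induction k using Nat.strong_induction_on with
    | _ k ih =>
      have hNk : 1 ≤ N + k := by omega
      have hxe : x (N + d + k) = f (fun i => x (N + k + i)) := by
        have := hrec (N + k) hNk
        rw [show N + d + k = N + k + d by omega, this]
      rw [hxe]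
      by_cases hcase : ∀ i : Fin d, x (N + k + i) < C
      · -- window in the box
        apply Finset.le_sup
        rw [Fintype.mem_piFinset]
        intro i
        rw [Finset.mem_Icc]
        exact ⟨hxpos _ (by omega), by have := hcase i; omega⟩
      · push_neg at hcase
        obtain ⟨i₀, hi₀⟩ := hcase
        have hlt := hdec (fun i => x (N + k + i)) (fun i => hxpos _ (by omega))
          ⟨i₀, hi₀⟩
        -- sup of window ≤ S
        obtain ⟨j, -, hj⟩ := Finset.exists_mem_eq_sup Finset.univ
          (Finset.univ_nonempty) (fun i : Fin d => x (N + k + i))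
        have hsupC : C ≤ Finset.univ.sup (fun i : Fin d => x (N + k + i)) :=
          le_trans hi₀ (Finset.le_sup (f := fun i : Fin d => x (N + k + i)) (Finset.mem_univ i₀))
        have hjS : x (N + k + (j : ℕ)) ≤ S := by
          by_cases hjc : k + (j : ℕ) < d
          · exfalso
            have h1 := hwin (k + (j : ℕ)) hjc
            rw [hj] at hsupC
            rw [show N + (k + (j:ℕ)) = N + k + (j:ℕ) by omega] at h1
            omega
          · have hk' : k + (j : ℕ) - d < k := by have := j.isLt; omega
            have := ih (k + (j : ℕ) - d) hk'
            rw [show N + d + (k + (j:ℕ) - d) = N + k + (j:ℕ) by have := j.isLt; omega] at this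
            exact this
        rw [hj] at hlt
        exact le_of_lt (lt_of_lt_of_le hlt hjS)
  have hev : ∀ᶠ n in Filter.atTop, x n ≤ S := by
    rw [Filter.eventually_atTop]
    refine ⟨N + d, fun n hn => ?_⟩
    have := key (n - (N + d))
    rwa [show N + d + (n - (N+d)) = n by omega] at this
  constructor
  · exact Filter.limsup_le_of_le
      (Filter.isCoboundedUnder_le_of_le Filter.atTop (fun n => Nat.zero_le _)) hev
  · refine ⟨S + (Finset.range (N + d)).sup x, fun n => ?_⟩
    by_cases hn : n < N + d
    · have := Finset.le_sup (f := x) (Finset.mem_range.2 hn)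
      omega
    · have := key (n - (N + d))
      rw [show N + d + (n - (N+d)) = n by omega] at this
      omega
end

section
/- Let d ≥ 1 and let f : ℕ^d → ℕ be a function. Suppose there exists C ≥ 1 such that f(n₁,…,n_d) < max{n₁,…,n_d} whenever n_i ≥ C for at least one index i ∈ {1,…,d}. Let (x_n)_{n≥1} be a sequence of positive integers satisfying x_{n+d} = f(x_n, …, x_{n+d-1}) for all n ≥ 1. Then there exists m ≥ 0 such that x_{m+1}, x_{m+2}, …, x_{m+d} are all at most C−1. -/
/-- Under the same decreasingness hypothesis on `f`, for any sequence of
positive integers satisfying the order-`d` recurrence for `f`, there exists `m ≥ 0`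
such that `x_{m+1}, …, x_{m+d}` are all at most `C - 1`. -/
theorem stmt_2 (d : ℕ) (hd : 1 ≤ d) (f : (Fin d → ℕ) → ℕ)
    (hfpos : ∀ v : Fin d → ℕ, (∀ i, 1 ≤ v i) → 1 ≤ f v)
    (C : ℕ) (hC : 1 ≤ C)
    (hdec : ∀ v : Fin d → ℕ, (∀ i, 1 ≤ v i) → (∃ i, C ≤ v i) →
      f v < Finset.univ.sup v)
    (x : ℕ → ℕ) (hxpos : ∀ n, 1 ≤ n → 1 ≤ x n)
    (hrec : ∀ n, 1 ≤ n → x (n + d) = f (fun i => x (n + i))) :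
    ∃ m : ℕ, ∀ i : Fin d, x (m + 1 + i) ≤ C - 1 := by
  by_contra hcon
  push_neg at hcon
  -- every window has an element ≥ C
  have hbig : ∀ m : ℕ, ∃ i : Fin d, C ≤ x (m + 1 + i) := by
    intro m
    obtain ⟨i, hi⟩ := hcon m
    exact ⟨i, by omega⟩
  set M : ℕ → ℕ := fun n => Finset.univ.sup (fun i : Fin d => x (n + 1 + i)) with hM
  have hMpos : ∀ n, 1 ≤ M n := by
    intro n
    have : (⟨0, hd⟩ : Fin d) ∈ Finset.univ := Finset.mem_univ _
    calc 1 ≤ x (n + 1 + (⟨0, hd⟩ : Fin d)) := hxpos _ (by omega)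
      _ ≤ M n := Finset.le_sup (f := fun i : Fin d => x (n + 1 + i)) this
  -- the new value is strictly below the window sup
  have hnew : ∀ n, x (n + 1 + d) < M n := by
    intro n
    have hrw : x (n + 1 + d) = f (fun i => x (n + 1 + i)) := hrec (n + 1) (by omega)
    rw [hrw]
    exact hdec _ (fun i => hxpos _ (by omega)) (hbig n)
  have hstep : ∀ n, M (n + 1) ≤ M n := by
    intro n
    apply Finset.sup_le
    intro i _
    by_cases hi : (i : ℕ) + 1 < d
    · have : n + 1 + 1 + i = n + 1 + ((⟨i + 1, hi⟩ : Fin d) : ℕ) := by simp; omega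
      rw [this]
      exact Finset.le_sup (f := fun j : Fin d => x (n + 1 + j)) (Finset.mem_univ _)
    · have hid : (i : ℕ) = d - 1 := by omega
      have : n + 1 + 1 + (i : ℕ) = n + 1 + d := by omega
      rw [this]
      exact (hnew n).le
    -- monotone
  have hmono : ∀ a b, a ≤ b → M b ≤ M a := by
    intro a b hab
    induction b with
    | zero => simp_all
    | succ k ih =>
      rcases Nat.lt_or_ge a (k + 1) with h | h
      · exact (hstep k).trans (ih (by omega))
      · have : a = k + 1 := by omega
        subst this; exact le_rfl
  have hdrop : ∀ n, M (n + d) < M n := by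
    intro n
    have h0 : 0 < M n := hMpos n
    rw [hM]
    apply (Finset.sup_lt_iff (show ⊥ < M n from h0)).mpr
    intro i _
    have : n + d + 1 + (i : ℕ) = (n + i) + 1 + d := by omega
    rw [this]
    exact lt_of_lt_of_le (hnew (n + i)) (hmono n (n + i) (by omega))
  have hkey : ∀ k, M (k * d) + k ≤ M 0 := by
    intro k
    induction k with
    | zero => simp
    | succ k ih =>
      have h1 : M ((k + 1) * d) < M (k * d) := by
        have : (k + 1) * d = k * d + d := by ring
        rw [this]; exact hdrop (k * d)
      omega
  have := hkey (M 0)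
  have := hMpos (M 0 * d)
  omega
end

section
/- Fix an integer k ≥ 0 and a starting value x₁ ≥ 1, and let (x_n)_{n≥1} be the sequence of positive integers defined by x_{n+1} = φ(x_n) + k for all n ≥ 1. Then x_n ≤ max{x₁, k⁴} + (k+1)² for all n ≥ 1. -/
/-- If `p` is a prime divisor of `x`, then `φ(x) + x/p ≤ x`. -/
lemma tot_aux (p : ℕ) (hp : p.Prime) : ∀ x, p ∣ x → x.totient + x / p ≤ x := by
  intro x
  induction x using Nat.strong_induction_on with
  | _ x ih =>
    intro hdvd
    rcases Nat.eq_zero_or_pos x with rfl | hx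
    · simp
    obtain ⟨m, rfl⟩ := hdvd
    have hm : 0 < m := Nat.pos_of_mul_pos_left (a := p) (by omega)
    have hp2 := hp.two_le
    have hdivm : (p * m) / p = m := Nat.mul_div_cancel_left m (by omega)
    rw [hdivm]
    by_cases hpm : p ∣ m
    · have h1 : (p * m).totient = p * m.totient := Nat.totient_mul_of_prime_of_dvd hp hpm
      have h2 : m.totient + m / p ≤ m := ih m (by nlinarith) hpm
      have h3 : p * (m / p) = m := Nat.mul_div_cancel' hpm
      nlinarith
    · have hcop : Nat.Coprime p m := hp.coprime_iff_not_dvd.mpr hpm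
      have h1 : (p * m).totient = p.totient * m.totient := Nat.totient_mul hcop
      have h2 : p.totient = p - 1 := Nat.totient_prime hp
      have h3 : m.totient ≤ m := Nat.totient_le m
      obtain ⟨r, rfl⟩ : ∃ r, p = r + 1 := ⟨p - 1, by omega⟩
      rw [h1, h2]
      simp only [Nat.add_sub_cancel]
      nlinarith

lemma find_i (q d a : ℕ) (hq : q.Prime) (hd : ¬ q ∣ d) : ∃ i, i < q ∧ q ∣ a + i * d := by
  haveI : Fact q.Prime := ⟨hq⟩
  have hu : (d : ZMod q) ≠ 0 := by
    rw [Ne, ZMod.natCast_eq_zero_iff]; exact hd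
  refine ⟨((-(a : ZMod q)) * (d : ZMod q)⁻¹).val, ZMod.val_lt _, ?_⟩
  rw [← ZMod.natCast_eq_zero_iff]
  push_cast
  rw [ZMod.natCast_val, ZMod.cast_id]
  field_simp
  ring

lemma div_minFac_ge (x s : ℕ) (hs : 0 < s) (h2 : 2 ≤ x) (hnp : ¬ x.Prime)
    (hx : s ^ 2 ≤ x) : s ≤ x / x.minFac := by
  have hp : x.minFac.Prime := Nat.minFac_prime (by omega)
  have hpsq : x.minFac ^ 2 ≤ x := Nat.minFac_sq_le_self (by omega) hnp
  rcases le_or_gt x.minFac s with h | h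
  · calc s ≤ x / s := (Nat.le_div_iff_mul_le hs).mpr (by nlinarith)
    _ ≤ x / x.minFac := Nat.div_le_div_left h hp.pos
  · have : x.minFac ≤ x / x.minFac :=
      (Nat.le_div_iff_mul_le hp.pos).mpr (by nlinarith)
    omega

/-- For `k ≥ 0` and starting value `x₁ ≥ 1`, the sequence defined by
`x_{n+1} = φ(x_n) + k` satisfies `x_n ≤ max{x₁, k⁴} + (k+1)²` for all `n ≥ 1`. -/
theorem stmt_4 (k : ℕ) (x : ℕ → ℕ) (hx1 : 1 ≤ x 1)
    (hrec : ∀ n, 1 ≤ n → x (n + 1) = Nat.totient (x n) + k) :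
    ∀ n, 1 ≤ n → x n ≤ max (x 1) (k ^ 4) + (k + 1) ^ 2 := by
  rcases le_or_gt k 1 with hk | hk
  · -- easy case k ≤ 1
    have key : ∀ m, 1 ≤ m → x m ≤ max (x 1) 2 := by
      intro m hm
      induction m with
      | zero => omega
      | succ m ih =>
        rcases Nat.eq_zero_or_pos m with rfl | hm1
        · exact le_max_left _ _
        · have hrec' := hrec m hm1
          have ihm := ih hm1
          rcases le_or_gt (x m) 1 with hx2 | hx2
          · have : (x m).totient ≤ 1 := le_trans (Nat.totient_le _) hx2
            omega
          · have : (x m).totient < x m := Nat.totient_lt _ hx2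
            omega
    intro n hn
    have h1 := key n hn
    interval_cases k
    · norm_num
      omega
    · norm_num
      omega
  · -- main case k ≥ 2
    obtain ⟨d, hdk⟩ : ∃ d, k = d + 1 := ⟨k - 1, by omega⟩
    obtain ⟨M, hMx, hMk, hMmax⟩ : ∃ M, x 1 ≤ M ∧ k ^ 4 ≤ M ∧ M = max (x 1) (k ^ 4) :=
      ⟨_, le_max_left _ _, le_max_right _ _, rfl⟩
    obtain ⟨q, hq'⟩ : ∃ q, q = k.minFac := ⟨_, rfl⟩
    have hq : q.Prime := hq' ▸ Nat.minFac_prime (by omega)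
    have hqk : q ≤ k := hq' ▸ Nat.minFac_le (by omega)
    have hq2 : 2 ≤ q := hq.two_le
    have hqd : ¬ q ∣ d := by
      intro h
      have h1 : q ∣ k := hq' ▸ Nat.minFac_dvd k
      have h2 : q ∣ k - d := Nat.dvd_sub h1 h
      have h3 : k - d = 1 := by omega
      rw [h3] at h2
      exact absurd (Nat.eq_one_of_dvd_one h2) (by omega)
    have hk4 : k ^ 2 + k ≤ k ^ 4 := by
      have h1 : 2 * k ≤ k * k := Nat.mul_le_mul_right k (by omega)
      have h2 : k ^ 2 = k * k := sq k
      have h3 : k ^ 4 = (k * k) * (k * k) := by ring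
      nlinarith
    have hklt : k < k ^ 2 := by nlinarith
    have hqd1 : (q - 1) * d ≤ d * d := Nat.mul_le_mul (by omega) le_rfl
    have hksq : k ^ 2 = d * d + 2 * d + 1 := by rw [hdk]; ring
    have hkk : d * d + k ≤ k ^ 2 := by omega
    -- the invariant
    have key : ∀ m, 1 ≤ m → x m ≤ M ∨
        (∃ i, i + 1 ≤ q ∧ q ∣ x m + i * d ∧ x m + i * d ≤ M + (q - 1) * d) := by
      intro m hm
      induction m with
      | zero => omega
      | succ m ih =>
        rcases Nat.eq_zero_or_pos m with rfl | hm1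
        · exact Or.inl hMx
        have hrec' := hrec m hm1
        have ihm := ih hm1
        rcases lt_or_ge (x m) (k ^ 2) with hsmall | hbig
        · -- small: next value at most k^2 + k ≤ M
          left
          have h1 : (x m).totient ≤ x m := Nat.totient_le _
          omega
        have ha2 : 2 ≤ x m := by omega
        by_cases hap : (x m).Prime
        · -- prime step: x (m+1) = x m + d
          have hnext : x (m + 1) = x m + d := by
            rw [hrec', Nat.totient_prime hap]
            omega
          have haq : q < x m := lt_of_lt_of_le (lt_of_le_of_lt hqk hklt) hbig
          have hqna : ¬ q ∣ x m := by
            intro h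
            have := (Nat.prime_dvd_prime_iff_eq hq hap).mp h
            omega
          rcases ihm with hle | ⟨i, hi1, hi2, hi3⟩
          · -- x m ≤ M : start a run (or stay below M)
            rcases le_or_gt (x (m + 1)) M with h | h
            · exact Or.inl h
            obtain ⟨i, hiq, hidvd⟩ := find_i q d (x m + d) hq hqd
            have hine : i ≠ q - 1 := by
              intro hiq1
              apply hqna
              have e : x m + d + (q - 1) * d = q * d + x m := by
                obtain ⟨r, hr⟩ : ∃ r, q = r + 1 := ⟨q - 1, by omega⟩
                rw [hr, Nat.add_sub_cancel]; ring
              rw [hiq1, e] at hidvd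
              exact (Nat.dvd_add_right ⟨d, rfl⟩).mp hidvd
            right
            refine ⟨i, by omega, by rwa [hnext], ?_⟩
            rw [hnext]
            have e : x m + d + i * d = x m + (i + 1) * d := by ring
            rw [e]
            have hb : (i + 1) * d ≤ (q - 1) * d := Nat.mul_le_mul (by omega) le_rfl
            omega
          · -- in a run: i ≥ 1, decrease i
            have hi0 : 1 ≤ i := by
              rcases Nat.eq_zero_or_pos i with rfl | h
              · simp only [Nat.zero_mul, Nat.add_zero] at hi2
                exact absurd hi2 hqna
              · exact h
            have e : x m + d + (i - 1) * d = x m + i * d := by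
              obtain ⟨r, hr⟩ : ∃ r, i = r + 1 := ⟨i - 1, by omega⟩
              rw [hr, Nat.add_sub_cancel]; ring
            right
            refine ⟨i - 1, by omega, ?_, ?_⟩
            · rw [hnext, e]; exact hi2
            · rw [hnext, e]; exact hi3
        · -- composite step: big drop
          left
          have htot : (x m).totient + (x m) / (x m).minFac ≤ x m :=
            tot_aux (x m).minFac (Nat.minFac_prime (by omega)) (x m) (Nat.minFac_dvd _)
          rcases ihm with hle | ⟨i, hi1, hi2, hi3⟩
          · -- x m ≤ M, x m ≥ k², drop at least k
            have hdiv : k ≤ x m / (x m).minFac := div_minFac_ge _ k (by omega) ha2 hap hbig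
            omega
          · rcases le_or_gt (x m) M with haM | haM
            · have hdiv : k ≤ x m / (x m).minFac := div_minFac_ge _ k (by omega) ha2 hap hbig
              omega
            · have hak4 : k ^ 4 ≤ x m := by omega
              have hdiv : k ^ 2 ≤ x m / (x m).minFac := by
                apply div_minFac_ge _ (k ^ 2) (by positivity) ha2 hap
                calc (k ^ 2) ^ 2 = k ^ 4 := by ring
                _ ≤ x m := hak4
              have h1 : x m ≤ M + (q - 1) * d := by
                have h2 : 0 ≤ i * d := Nat.zero_le _
                omega
              omega
    intro n hn
    rw [← hMmax]
    have hfin : d * d ≤ (k + 1) ^ 2 := by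
      have e : (k + 1) ^ 2 = d * d + 4 * d + 4 := by rw [hdk]; ring
      omega
    rcases key n hn with h | ⟨i, hi1, hi2, hi3⟩
    · omega
    · omega
end

section
/- Fix an integer k ≥ 0 and a starting value x₁ ≥ 1. The sequence (x_n)_{n≥1} of positive integers defined by x_{n+1} = φ(x_n) + k for all n ≥ 1 is eventually periodic. -/
open Nat Finset in
lemma totient_le_sub_div {p n : ℕ} (hp : p.Prime) (hd : p ∣ n) :
    n.totient ≤ n - n / p := by
  classical
  have hmul : #{m ∈ range n | p ∣ m} = n / p := by
    have : {m ∈ range n | p ∣ m} = (range (n / p)).image (· * p) := by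
      ext m
      simp only [Finset.mem_filter, Finset.mem_range, Finset.mem_image]
      constructor
      · rintro ⟨h1, j, rfl⟩
        exact ⟨j, (Nat.lt_div_iff_mul_lt' hd j).2 (by omega), by ring⟩
      · rintro ⟨j, hj, rfl⟩
        exact ⟨by rw [mul_comm]; exact (Nat.lt_div_iff_mul_lt' hd j).1 hj, j, by ring⟩
    rw [this, Finset.card_image_of_injective _ (fun a b h => by
      exact Nat.eq_of_mul_eq_mul_right hp.pos h), Finset.card_range]
  have hsplit := Finset.card_filter_add_card_filter_not (s := range n)
    (p := fun m => p ∣ m)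
  have h1 : n.totient ≤ #{m ∈ range n | ¬ p ∣ m} := by
    rw [Nat.totient]
    apply Finset.card_le_card
    intro m hm
    simp only [Finset.mem_filter, Finset.mem_range] at hm ⊢
    refine ⟨hm.1, fun hpm => ?_⟩
    have : p ∣ Nat.gcd n m := Nat.dvd_gcd hd hpm
    rw [Nat.Coprime] at *
    rw [hm.2] at this
    exact hp.one_lt.ne' (Nat.dvd_one.1 this)
  rw [Finset.card_range] at hsplit
  omega

lemma totient_composite_le {n : ℕ} (h1 : 1 < n) (hnp : ¬ n.Prime) :
    n.totient ≤ n - n.sqrt := by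
  have hp := Nat.minFac_prime (by omega : n ≠ 1)
  have hdvd := Nat.minFac_dvd n
  have hsq : n.minFac * n.minFac ≤ n := by
    have := Nat.minFac_sq_le_self (by omega) hnp
    nlinarith [this, sq_nonneg n.minFac]
  have hle : n.minFac ≤ n.sqrt := Nat.le_sqrt.mpr hsq
  have h2 : n.sqrt ≤ n / n.minFac := by
    have hs : n.sqrt * n.minFac ≤ n := by
      nlinarith [Nat.sqrt_le_self n, Nat.sqrt_le' n, hle]
    exact (Nat.le_div_iff_mul_le hp.pos).2 hs
  calc n.totient ≤ n - n / n.minFac := totient_le_sub_div hp hdvd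
    _ ≤ n - n.sqrt := by omega

/-- For `k ≥ 0` and starting value `x₁ ≥ 1`, the sequence defined by
`x_{n+1} = φ(x_n) + k` is eventually periodic. -/
theorem stmt_5 (k : ℕ) (x : ℕ → ℕ) (hx1 : 1 ≤ x 1)
    (hrec : ∀ n, 1 ≤ n → x (n + 1) = Nat.totient (x n) + k) :
    ∃ T : ℕ, 1 ≤ T ∧ ∃ N : ℕ, ∀ n, N ≤ n → x (n + T) = x n := by
  have hpos : ∀ n, 1 ≤ n → 1 ≤ x n := by
    intro n hn
    induction n, hn using Nat.le_induction with
    | base => exact hx1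
    | succ n hn ih =>
      rw [hrec n hn]
      have := Nat.totient_pos.mpr ih
      omega
  have hbound : ∃ B, ∀ n, 1 ≤ n → x n ≤ B := by
    rcases le_or_gt k 1 with hk | hk
    · refine ⟨max (x 1) 2, ?_⟩
      intro n hn
      induction n, hn using Nat.le_induction with
      | base => exact le_max_left _ _
      | succ n hn ih =>
        rw [hrec n hn]
        have h1 := hpos n hn
        rcases eq_or_lt_of_le h1 with h | h
        · rw [← h, Nat.totient_one]
          have := le_max_right (x 1) 2
          omega
        · have h2 := Nat.totient_lt (x n) h
          have := le_max_right (x 1) 2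
          omega
    · -- k ≥ 2
      set d := k - 1 with hdk
      have hd1 : 1 ≤ d := by omega
      obtain ⟨q, hq1, hq⟩ := Nat.exists_infinite_primes (d + 1)
      have hq2 := hq.two_le
      set L := q with hLq
      set C := (L * k + k + 1) ^ 2 with hC
      have hC7 : 7 ≤ L * k + k + 1 := by nlinarith
      have hx1' : L ≤ L * k := Nat.le_mul_of_pos_right _ (by omega)
      have hx2' : L * k + k + 1 ≤ (L * k + k + 1) ^ 2 := Nat.le_self_pow two_ne_zero _
      have hx3' : 7 * (L * k + k + 1) ≤ (L * k + k + 1) ^ 2 := by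
        rw [pow_two]; exact Nat.mul_le_mul_right _ hC7
      have hkLk : k ≤ L * k := Nat.le_mul_of_pos_left _ (by omega)
      have hCq : q ≤ C := by omega
      have hC2k : 2 * k + 2 ≤ C := by omega
      have descent : ∀ s, 1 ≤ s → C < x s →
          ∃ j, 1 ≤ j ∧ j ≤ L ∧ x (s + j) < x s ∧ ∀ i, i ≤ j → x (s + i) ≤ x s + L * k := by
        intro s hs hCs
        have hm2 : 2 ≤ x s := by omega
        have hsqrtm : L * k + k + 1 ≤ (x s).sqrt := by
          apply Nat.le_sqrt.mpr
          have : (L * k + k + 1) ^ 2 < x s := hCs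
          nlinarith
        by_cases hmp : (x s).Prime
        · -- prime run
          have hchain : ∀ j, (∀ i, i < j → (x (s + i)).Prime) → x (s + j) = x s + j * d := by
            intro j
            induction j with
            | zero => simp
            | succ j ih =>
              intro hall
              have hprev : x (s + j) = x s + j * d := ih (fun i hi => hall i (by omega))
              have hpj : (x (s + j)).Prime := hall j (by omega)
              have h2 := hpj.two_le
              have hstep : x (s + (j + 1)) = (x (s + j)).totient + k := by
                rw [show s + (j + 1) = (s + j) + 1 by ring]
                exact hrec (s + j) (by omega)
              rw [hstep, Nat.totient_prime hpj]
              have hmul : (j + 1) * d = j * d + d := by ring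
              omega
          have hP : ∃ j, j < q ∧ ¬ (x (s + j)).Prime := by
            by_contra hall
            push_neg at hall
            haveI : Fact q.Prime := ⟨hq⟩
            have hqd : ¬ q ∣ d := fun h => by
              have := Nat.le_of_dvd (by omega) h
              omega
            have hd0 : (d : ZMod q) ≠ 0 := by
              rw [Ne, ZMod.natCast_eq_zero_iff]; exact hqd
            set j1 := (-(x s : ZMod q) / (d : ZMod q)).val with hj1
            have hj1q : j1 < q := ZMod.val_lt _
            have hdvd : q ∣ x s + j1 * d := by
              rw [← ZMod.natCast_eq_zero_iff]
              push_cast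
              rw [hj1, ZMod.natCast_val, ZMod.cast_id, div_mul_cancel₀ _ hd0]
              ring
            have hprime : (x (s + j1)).Prime := hall j1 hj1q
            have heq : x (s + j1) = x s + j1 * d := hchain j1 (fun i hi => hall i (by omega))
            rw [← heq] at hdvd
            rcases (Nat.Prime.eq_one_or_self_of_dvd hprime q hdvd) with h | h
            · omega
            · -- x (s+j1) = q but x (s+j1) ≥ x s > C ≥ q
              have : x s ≤ x (s + j1) := by omega
              omega
          have hspec := Nat.find_spec hP
          have hmin := fun i (hi : i < Nat.find hP) => Nat.find_min hP hi
          set j0 := Nat.find hP with hj0def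
          obtain ⟨hj0q, hj0np⟩ := hspec
          have hprimes : ∀ i, i < j0 → (x (s + i)).Prime := by
            intro i hi
            by_contra hnp
            exact hmin i hi ⟨by omega, hnp⟩
          have hj0pos : 1 ≤ j0 := by
            rcases Nat.eq_zero_or_pos j0 with h | h
            · exfalso; apply hj0np; rw [h, Nat.add_zero]; exact hmp
            · exact h
          have heq : x (s + j0) = x s + j0 * d := hchain j0 hprimes
          have hj0d : j0 * d ≤ L * k := Nat.mul_le_mul (by omega) (by omega)
          have hv1 : 1 < x (s + j0) := by omega
          have hφ := totient_composite_le hv1 hj0np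
          have hsv : L * k + k + 1 ≤ (x (s + j0)).sqrt :=
            le_trans hsqrtm (Nat.sqrt_le_sqrt (by omega))
          have hsvv : (x (s + j0)).sqrt ≤ x (s + j0) := Nat.sqrt_le_self _
          have hnext : x (s + (j0 + 1)) = (x (s + j0)).totient + k := by
            rw [show s + (j0 + 1) = (s + j0) + 1 by ring]
            exact hrec (s + j0) (by omega)
          have hdrop : x (s + (j0 + 1)) < x s := by
            rw [hnext]; omega
          refine ⟨j0 + 1, by omega, by omega, hdrop, ?_⟩
          intro i hi
          rcases Nat.lt_or_ge i (j0 + 1) with h | h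
          · have heqi : x (s + i) = x s + i * d := hchain i (fun i' hi' => hprimes i' (by omega))
            have : i * d ≤ L * k := Nat.mul_le_mul (by omega) (by omega)
            omega
          · have : i = j0 + 1 := by omega
            rw [this]
            omega
        · -- composite: one step
          have hφ := totient_composite_le (by omega : 1 < x s) hmp
          have hnext : x (s + 1) = (x s).totient + k := hrec s hs
          have hsvv : (x s).sqrt ≤ x s := Nat.sqrt_le_self _
          refine ⟨1, le_refl _, by omega, by rw [hnext]; omega, ?_⟩
          intro i hi
          rcases Nat.le_one_iff_eq_zero_or_eq_one.mp hi with h | h <;> rw [h]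
          · rw [Nat.add_zero]; omega
          · rw [hnext]; omega
      have W : ∀ D s p, 1 ≤ s → s ≤ p → p ≤ s + D →
          x p ≤ max (x s) (C + k) + L * k := by
        intro D
        induction D using Nat.strong_induction_on with
        | _ D ih =>
          intro s p hs hsp hpD
          rcases eq_or_lt_of_le hsp with rfl | hlt
          · exact le_trans (le_max_left _ _) (Nat.le_add_right _ _)
          · rcases le_or_gt (x s) C with hsC | hsC
            · have h1 : x (s + 1) ≤ C + k := by
                rw [hrec s hs]
                have := Nat.totient_le (x s)
                omega
              have h2 := ih (D - 1) (by omega) (s + 1) p (by omega) (by omega) (by omega)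
              have h3 : max (x (s + 1)) (C + k) = C + k := max_eq_right h1
              rw [h3] at h2
              have := le_max_right (x s) (C + k)
              omega
            · obtain ⟨j, hj1, hjL, hdrop, hbnd⟩ := descent s hs hsC
              rcases le_or_gt (s + j) p with hge | hlt2
              · have h2 := ih (D - j) (by omega) (s + j) p (by omega) hge (by omega)
                have h3 : max (x (s + j)) (C + k) ≤ max (x s) (C + k) :=
                  max_le_max (le_of_lt hdrop) le_rfl
                omega
              · have h4 := hbnd (p - s) (by omega)
                rw [show s + (p - s) = p by omega] at h4
                have := le_max_left (x s) (C + k)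
                omega
      exact ⟨max (x 1) (C + k) + L * k, fun p hp => W (p - 1) 1 p le_rfl hp (by omega)⟩
  obtain ⟨B, hB⟩ := hbound
  have hmap : ∀ a ∈ Finset.Icc 1 (B + 2), x a ∈ Finset.range (B + 1) := by
    intro a ha
    rw [Finset.mem_Icc] at ha
    rw [Finset.mem_range]
    exact Nat.lt_succ_of_le (hB a ha.1)
  have hcard : (Finset.range (B + 1)).card < (Finset.Icc 1 (B + 2)).card := by
    rw [Finset.card_range, Nat.card_Icc]
    omega
  obtain ⟨a, ha, b, hb, hne, heq⟩ :=
    Finset.exists_ne_map_eq_of_card_lt_of_maps_to hcard hmap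
  rw [Finset.mem_Icc] at ha hb
  obtain ⟨a', b', ha1, hab, hxe⟩ : ∃ a' b', 1 ≤ a' ∧ a' < b' ∧ x a' = x b' := by
    rcases lt_or_gt_of_ne hne with h | h
    · exact ⟨a, b, ha.1, h, heq⟩
    · exact ⟨b, a, hb.1, h, heq.symm⟩
  refine ⟨b' - a', by omega, a', ?_⟩
  intro n hn
  induction n, hn using Nat.le_induction with
  | base => rw [show a' + (b' - a') = b' by omega]; exact hxe.symm
  | succ n hn ih =>
    rw [show n + 1 + (b' - a') = (n + (b' - a')) + 1 by omega,
      hrec _ (by omega), ih, ← hrec n (by omega)]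
end

section
/- Fix an integer k ≥ 2 and let (x_n)_{n≥1} be a sequence of positive integers satisfying x_{n+1} = φ(x_n) + k for all n ≥ 1. If r ≥ 1 is an index with x_r ≥ k⁴, then there exists i ∈ {1,…,k} such that x_{r+i} < x_r. -/
lemma tot_bound (n p : ℕ) (hp : p.Prime) (hd : p ∣ n) (hn : 0 < n) :
    n.totient + n / p ≤ n := by
  obtain ⟨b, hb⟩ : ∃ b, n.factorization p = b + 1 :=
    ⟨n.factorization p - 1, by
      have := hp.factorization_pos_of_dvd hn.ne' hd; omega⟩
  obtain ⟨q, rfl⟩ : ∃ q, p = q + 2 := ⟨p - 2, by have := hp.two_le; omega⟩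
  set m := n / (q + 2) ^ (b + 1) with hm
  have hsplit : (q + 2) ^ (b + 1) * m = n := by
    rw [hm, ← hb]; exact Nat.ordProj_mul_ordCompl_eq_self n (q + 2)
  have hcop : Nat.Coprime ((q + 2) ^ (b + 1)) m := by
    rw [hm, ← hb]
    exact (Nat.coprime_ordCompl hp hn.ne').pow_left _
  have htot : n.totient = ((q + 2) ^ (b + 1)).totient * m.totient := by
    rw [← hsplit, Nat.totient_mul hcop]
  have hppow : ((q + 2) ^ (b + 1)).totient = (q + 2) ^ b * (q + 1) := by
    rw [Nat.totient_prime_pow hp (Nat.succ_pos b)]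
    rfl
  have hdiv : n / (q + 2) = (q + 2) ^ b * m := by
    rw [← hsplit, pow_succ, mul_comm ((q + 2) ^ b) (q + 2), mul_assoc,
      Nat.mul_div_cancel_left _ (by omega : 0 < q + 2)]
  have h1 : n.totient ≤ (q + 2) ^ b * (q + 1) * m := by
    rw [htot, hppow]
    exact Nat.mul_le_mul_left _ (Nat.totient_le m)
  have h2 : (q + 2) ^ b * (q + 1) * m + (q + 2) ^ b * m = n := by
    rw [← hsplit, pow_succ]; ring
  omega

lemma comp_bound (k n : ℕ) (hk : 2 ≤ k) (hn : k ^ 4 ≤ n) (hnp : ¬ n.Prime) :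
    n.totient + k ^ 2 ≤ n := by
  have h16 : 16 ≤ k ^ 4 := by
    calc (16 : ℕ) = 2 ^ 4 := by norm_num
    _ ≤ k ^ 4 := Nat.pow_le_pow_left hk 4
  have hn1 : 1 < n := by omega
  have hp := Nat.minFac_prime hn1.ne'
  have hsq : n.minFac ^ 2 ≤ n := Nat.minFac_sq_le_self (by omega) hnp
  have hsn : n.minFac ≤ Nat.sqrt n := Nat.le_sqrt.2 (by nlinarith)
  have hks : k ^ 2 ≤ Nat.sqrt n := Nat.le_sqrt.2 (by nlinarith)
  have hkp : k ^ 2 * n.minFac ≤ n :=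
    le_trans (Nat.mul_le_mul hks hsn) (by rw [← pow_two]; exact Nat.sqrt_le' n)
  have hkdiv : k ^ 2 ≤ n / n.minFac := (Nat.le_div_iff_mul_le hp.pos).2 hkp
  have := tot_bound n n.minFac hp (Nat.minFac_dvd n) (by omega)
  omega

/-- For `k ≥ 2` and a sequence of positive integers with
`x_{n+1} = φ(x_n) + k`, if `x_r ≥ k⁴` for some `r ≥ 1`, then `x_{r+i} < x_r` for some
`i ∈ {1, …, k}`. -/
theorem stmt_9 (k : ℕ) (hk : 2 ≤ k) (x : ℕ → ℕ) (hxpos : ∀ n, 1 ≤ n → 1 ≤ x n)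
    (hrec : ∀ n, 1 ≤ n → x (n + 1) = Nat.totient (x n) + k)
    (r : ℕ) (hr : 1 ≤ r) (hxr : k ^ 4 ≤ x r) :
    ∃ i, 1 ≤ i ∧ i ≤ k ∧ x (r + i) < x r := by
  by_contra hcon
  push_neg at hcon
  have h : ∀ i, 1 ≤ i → i ≤ k → x r ≤ x (r + i) := fun i h1 h2 => hcon i h1 h2
  have h16 : 16 ≤ k ^ 4 := by
    calc (16 : ℕ) = 2 ^ 4 := by norm_num
    _ ≤ k ^ 4 := Nat.pow_le_pow_left hk 4
  have hk2 : (k - 1) * (k - 1) + 2 * k = k ^ 2 + 1 := by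
    obtain ⟨d, rfl⟩ : ∃ d, k = d + 1 := ⟨k - 1, by omega⟩
    have hd : d + 1 - 1 = d := rfl
    rw [hd]; ring
  -- every term up to k steps equals x r + j*(k-1)
  have P : ∀ j, j ≤ k → x (r + j) = x r + j * (k - 1) := by
    intro j
    induction j with
    | zero => intro _; simp
    | succ j ih =>
      intro hjk
      have hj : j ≤ k := by omega
      have hPj := ih hj
      have hnge : k ^ 4 ≤ x (r + j) := by omega
      have hrecj : x (r + (j + 1)) = (x (r + j)).totient + k := by
        rw [← add_assoc]; exact hrec (r + j) (by omega)
      by_cases hprime : (x (r + j)).Prime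
      · have hstep : x (r + (j + 1)) = x (r + j) - 1 + k := by
          rw [hrecj, Nat.totient_prime hprime]
        have hjk1 : j * (k - 1) + (k - 1) = (j + 1) * (k - 1) := by ring
        omega
      · exfalso
        have hbound := comp_bound k (x (r + j)) hk hnge hprime
        have hxle : x r ≤ x (r + (j + 1)) := h (j + 1) (by omega) hjk
        have hjle : j * (k - 1) ≤ (k - 1) * (k - 1) :=
          Nat.mul_le_mul_right _ (by omega)
        omega
  -- choose j with k ∣ x (r + j)
  have hjk : x r % k < k := Nat.mod_lt _ (by omega)
  set j := x r % k with hj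
  have hPj := P j (by omega)
  have hNge : k ^ 4 ≤ x (r + j) := by omega
  have hdvd : k ∣ x (r + j) := by
    have h1 : k ∣ x r - j := Nat.dvd_sub_mod (x r)
    have hexp : j * (k - 1) + j = j * k := by
      obtain ⟨d, hd⟩ : ∃ d, k = d + 1 := ⟨k - 1, by omega⟩
      rw [hd]
      have : d + 1 - 1 = d := rfl
      rw [this]; ring
    have h2 : x (r + j) = (x r - j) + j * k := by
      have : j ≤ x r := Nat.mod_le _ _
      omega
    rw [h2]
    exact Nat.dvd_add h1 (Dvd.intro_left j rfl)
  have hNprime : (x (r + j)).Prime := by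
    by_contra hnp
    have hbound := comp_bound k (x (r + j)) hk hNge hnp
    have hrecj : x (r + (j + 1)) = (x (r + j)).totient + k := by
      rw [← add_assoc]; exact hrec (r + j) (by omega)
    have hxle : x r ≤ x (r + (j + 1)) := h (j + 1) (by omega) (by omega)
    have hjle : j * (k - 1) ≤ (k - 1) * (k - 1) :=
      Nat.mul_le_mul_right _ (by omega)
    omega
  have hkN : k < x (r + j) := by
    have : k ^ 1 < k ^ 4 := Nat.pow_lt_pow_right (by omega) (by norm_num)
    rw [pow_one] at this
    omega
  rcases Nat.Prime.eq_one_or_self_of_dvd hNprime k hdvd with h1 | h1 <;> omega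
end

section
/- Fix an even integer k ≥ 0 and starting values x₁, x₂ ≥ 1 with max{x₁, x₂} ≥ 3 or k ≥ 1, and let (x_n)_{n≥1} be the sequence defined by x_{n+2} = φ(x_{n+1}) + φ(x_n) + k for all n ≥ 1. Then x_n is even for all n ≥ 5. -/
/-- For an even `k ≥ 0` and starting values `x₁, x₂ ≥ 1` with
`max{x₁, x₂} ≥ 3` or `k ≥ 1`, the sequence defined by
`x_{n+2} = φ(x_{n+1}) + φ(x_n) + k` has `x_n` even for all `n ≥ 5`. -/
theorem stmt_12 (k : ℕ) (hk : Even k) (x : ℕ → ℕ) (hx1 : 1 ≤ x 1) (hx2 : 1 ≤ x 2)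
    (hbig : 3 ≤ max (x 1) (x 2) ∨ 1 ≤ k)
    (hrec : ∀ n, 1 ≤ n → x (n + 2) = Nat.totient (x (n + 1)) + Nat.totient (x n) + k) :
    ∀ n, 5 ≤ n → Even (x n) := by
  have hpos : ∀ n, 1 ≤ n → 0 < x n := by
    intro n
    induction n using Nat.strong_induction_on with
    | _ n ih =>
      intro hn
      match n, hn with
      | 1, _ => exact hx1
      | 2, _ => exact hx2
      | (m+3), _ =>
        rw [show m + 3 = (m+1) + 2 from rfl, hrec (m+1) (by omega)]
        have h1 := Nat.totient_pos.mpr (ih (m+1+1) (by omega) (by omega))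
        omega
  have htot2 : ∀ m : ℕ, 3 ≤ m → 2 ≤ Nat.totient m := by
    intro m hm
    have he : Even (Nat.totient m) := Nat.totient_even (by omega)
    have hp : 0 < Nat.totient m := Nat.totient_pos.mpr (by omega)
    obtain ⟨r, hr⟩ := he
    omega
  have htot1 : ∀ m : ℕ, 1 ≤ m → 1 ≤ Nat.totient m := fun m hm =>
    Nat.totient_pos.mpr hm
  obtain ⟨j, hj⟩ := hk
  have hge3 : ∀ n, 3 ≤ n → 3 ≤ x n := by
    intro n
    induction n using Nat.strong_induction_on with
    | _ n ih =>
      intro hn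
      match n, hn with
      | 3, _ =>
        rw [show 3 = 1 + 2 from rfl, hrec 1 le_rfl]
        have h1 := htot1 _ hx1
        have h2 : 1 ≤ (x (1+1)).totient := htot1 _ hx2
        rcases hbig with hb | hb
        · rcases le_max_iff.mp hb with hb' | hb'
          · have := htot2 _ hb'; omega
          · have : 2 ≤ (x (1+1)).totient := htot2 _ hb'; omega
        · omega
      | 4, _ =>
        rw [show 4 = 2 + 2 from rfl, hrec 2 (by omega)]
        have h1 : 2 ≤ (x (2+1)).totient := htot2 _ (ih 3 (by omega) (by omega))
        have h2 := htot1 _ hx2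
        omega
      | (m+5), _ =>
        rw [show m + 5 = (m+3) + 2 from rfl, hrec (m+3) (by omega)]
        have h1 : 2 ≤ (x (m+3+1)).totient := htot2 _ (ih (m+4) (by omega) (by omega))
        have h2 := htot2 _ (ih (m+3) (by omega) (by omega))
        omega
  intro n hn
  obtain ⟨m, rfl⟩ : ∃ m, n = m + 5 := ⟨n - 5, by omega⟩
  rw [show m + 5 = (m+3) + 2 from rfl, hrec (m+3) (by omega)]
  have e1 : Even (Nat.totient (x (m+4))) := Nat.totient_even (by have := hge3 (m+4) (by omega); omega)
  have e2 : Even (Nat.totient (x (m+3))) := Nat.totient_even (by have := hge3 (m+3) (by omega); omega)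
  exact (e1.add e2).add ⟨j, hj⟩
end
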